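/- arXiv:1904.07330 — 4 statements merged into one kernel-verified Lean document; each statement's English description precedes it below -/
import Mathlib

section
/- The Shin–Kumar–Helleseth Formula K(a/(a+1)⁴) = K(a³/(a+1)⁴) for all a ∈ F \ {0,1} follows from the Helleseth–Zinoviev Formula I, K(b³(b+1)) = K(b(b+1)³) for all b ∈ F \ {0,1}, via the substitution a = b/(b+1). -/
/-- The Kloosterman sum over `GF(2^m)`: `K(a) = ∑_{x ≠ 0} (-1)^{Tr(a·x + 1/x)}`. -/
noncomputable def Kl (m : ℕ) (a : GaloisField 2 m) : ℤ :=
  letI := Fintype.ofFinite (GaloisField 2 m)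
  letI := Classical.decEq (GaloisField 2 m)
  ∑ x ∈ Finset.univ.erase (0 : GaloisField 2 m),
    (-1 : ℤ) ^ ((Algebra.trace (ZMod 2) (GaloisField 2 m) (a * x + x⁻¹)).val)

theorem skh_from_hz_I (m : ℕ) (hm : 0 < m)
    (hHZ : ∀ b : GaloisField 2 m, b ≠ 0 → b ≠ 1 →
      Kl m (b ^ 3 * (b + 1)) = Kl m (b * (b + 1) ^ 3)) :
    ∀ a : GaloisField 2 m, a ≠ 0 → a ≠ 1 →
      Kl m (a / (a + 1) ^ 4) = Kl m (a ^ 3 / (a + 1) ^ 4) := by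
  intro a ha ha1
  have h2 : (2 : GaloisField 2 m) = 0 := by
    have := CharP.cast_eq_zero (GaloisField 2 m) 2
    exact_mod_cast this
  have hadd : a + 1 ≠ 0 := by
    intro h
    apply ha1
    linear_combination h - h2
  set b := a / (a + 1) with hb
  have hb0 : b ≠ 0 := div_ne_zero ha hadd
  have hb1 : b ≠ 1 := by
    intro h
    rw [hb, div_eq_one_iff_eq hadd] at h
    exact one_ne_zero (by linear_combination -h : (1 : GaloisField 2 m) = 0)
  have key := hHZ b hb0 hb1
  have e1 : b ^ 3 * (b + 1) = a ^ 3 / (a + 1) ^ 4 := by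
    rw [hb]; field_simp; ring_nf
    linear_combination a * h2
  have e2 : b * (b + 1) ^ 3 = a / (a + 1) ^ 4 := by
    rw [hb]; field_simp; ring_nf
    linear_combination (3*a + 6*a^2 + 4*a^3) * h2
  rw [e1, e2] at key
  exact key.symm
end

section
/- Let c ∈ F and n an integer such that c^{4n} + 1 ≠ 0 (with c ≠ 0 when n is negative). Then K((c^{n+1}+c^n)³(c^{n+1}+1)/(c^{4n}+1)) = K((c^{n+1}+c^n)(c^{n+1}+1)³/(c^{4n}+1)). -/
namespace KlAux

open Finset

variable {m : ℕ}

abbrev F (m : ℕ) := GaloisField 2 m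

noncomputable def tr (m : ℕ) (x : F m) : ZMod 2 := Algebra.trace (ZMod 2) (F m) x

lemma two_eq_zero : (2 : F m) = 0 := by
  have := CharP.cast_eq_zero (F m) 2; simpa using this

lemma tr_add (a b : F m) : tr m (a + b) = tr m a + tr m b := map_add _ a b

lemma tr_zero : tr m (0 : F m) = 0 := map_zero _

lemma zmod_add_self (a : ZMod 2) : a + a = 0 := by revert a; decide

noncomputable def frobAlg (m : ℕ) : F m ≃ₐ[ZMod 2] F m :=
  AlgEquiv.ofRingEquiv (f := frobeniusEquiv (F m) 2) (fun r => by
    show frobenius (F m) 2 _ = _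
    rw [frobenius_def, ← map_pow, ZMod.pow_card r])

lemma tr_sq (x : F m) : tr m (x ^ 2) = tr m x := by
  have h1 := trace_eq_sum_automorphisms (K := ZMod 2) (x ^ 2)
  have h2 := trace_eq_sum_automorphisms (K := ZMod 2) (x : F m)
  have h3 : ∑ σ : F m ≃ₐ[ZMod 2] F m, σ (x ^ 2) = ∑ σ : F m ≃ₐ[ZMod 2] F m, σ x := by
    have h0 : ∀ σ : F m ≃ₐ[ZMod 2] F m, σ (x ^ 2) = (σ * frobAlg m) x := fun σ => rfl
    rw [Fintype.sum_congr _ _ h0]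
    exact Fintype.sum_equiv (Equiv.mulRight (frobAlg m)) _ _ (fun σ => rfl)
  have h4 : algebraMap (ZMod 2) (F m) (tr m (x^2)) = algebraMap (ZMod 2) (F m) (tr m x) := by
    rw [tr, tr, h1, h2, h3]
  exact (algebraMap (ZMod 2) (F m)).injective h4

lemma tr_artin_schreier (w : F m) : tr m (w ^ 2 + w) = 0 := by
  rw [tr_add, tr_sq, zmod_add_self]

lemma tr_one_ne_zero (x : F m) (hx : tr m x = 1) : x ≠ 0 := by
  intro h; rw [h, tr_zero] at hx; exact absurd hx (by decide)

lemma exists_tr_one : ∃ y : F m, tr m y = 1 := by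
  obtain ⟨y, hy⟩ := Algebra.trace_surjective (ZMod 2) (F m) 1
  exact ⟨y, hy⟩

/-- The key injectivity: the map `y ↦ y + y⁻¹ + y⁻²` is injective on `{y | Tr y = 1}`. -/
lemma g_inj (y z : F m) (hy : tr m y = 1) (hz : tr m z = 1)
    (hyz : y + y⁻¹ + (y⁻¹)^2 = z + z⁻¹ + (z⁻¹)^2) : y = z := by
  have h2 : (2 : F m) = 0 := two_eq_zero
  have hy0 : y ≠ 0 := tr_one_ne_zero y hy
  have hz0 : z ≠ 0 := tr_one_ne_zero z hz
  by_contra hne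
  have he : y + z ≠ 0 := by
    intro h; exact hne (by linear_combination h - z*h2)
  field_simp at hyz
  have hcancel : ((y+z)*(y*z))*((y*z)^2 + y*z + (y+z)) = 0 := by
    linear_combination y*z*hyz + (y^3*z^4 + y^3*z^2 + y^3*z + y^2*z^2)*h2
  have hP : (y*z)^2 + y*z + (y+z) = 0 :=
    (mul_eq_zero.mp hcancel).resolve_left (mul_ne_zero he (mul_ne_zero hy0 hz0))
  have hπ1 : y*z + 1 ≠ 0 := by
    intro h
    have hq : y*z = 1 := by linear_combination h - h2
    exact he (by linear_combination hP - (y*z+2)*hq - h2)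
  have C1 : (y*(y+z)⁻¹)^2 + (y*(y+z)⁻¹) = (y*z)*((y+z)⁻¹)^2 := by
    field_simp
    linear_combination y*h2
  have tB : (y*z)*((y+z)⁻¹)^2 = (y*z)⁻¹ + (((y*z+1)⁻¹)^2 + (y*z+1)⁻¹) := by
    field_simp
    linear_combination (5*z - 4*z^2 + 5*y - 7*y*z - y*z^2 - 2*y*z^3 - 4*y^2 - y^2*z - 2*y^2*z^2
      - 2*y^3*z + y^3*z^3) * hP + (-3*z^2 + 2*z^3 - 6*y*z + 3*y*z^2 + y*z^4 - 3*y^2 + 3*y^2*z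
      + 2*y^3 + y^4*z) * h2 + (y^3*z^3 + y^2*z^2 + y^2*z + y*z^2) * hP
      + (2*y^2*z^4 + 3*y^3*z^3 + y^3*z^5 + 2*y^4*z^2 + y^5*z^3 - y^5*z^5 - y^4*z^3 - y^3*z^4
      - y^3*z^2 - y^2*z^3) * h2
  have tC : (y*(y*z)⁻¹)^2 + (y*(y*z)⁻¹) = y + (y*z)⁻¹ := by
    field_simp
    linear_combination (-2 - 2*y + 2*y^2 + 2*y^2*z - y^3*z^2) * hP
      + (z + y + 2*y*z + y^2 - y^3 - 2*y^3*z) * h2 + (y^3*z^2 + 1) * hP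
      + (-y^2*z^2 - y^4*z^2 - y^4*z^3 - z) * h2
  have e1 : tr m ((y*z)*((y+z)⁻¹)^2) = 0 := by
    rw [← C1]; exact tr_artin_schreier _
  have e2 : tr m ((y*z)⁻¹) = 0 := by
    rw [tB, tr_add, tr_artin_schreier] at e1
    simpa using e1
  have e3 : tr m y = 0 := by
    have := tr_artin_schreier (y*(y*z)⁻¹)
    rw [tC, tr_add, e2] at this
    simpa using this
  rw [e3] at hy; exact absurd hy (by decide)

lemma tr_split (σ ζ : F m) (hzz : ζ^2 + ζ = σ^2) (w : F m) :
    tr m (σ*w) = tr m (ζ*w) + tr m (ζ*w^2) := by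
  have h1 : (σ*w)^2 = (ζ*w)^2 + ζ*w^2 := by linear_combination -(w^2)*hzz
  rw [← tr_sq (σ*w), h1, tr_add, tr_sq]

lemma exists_v0 (ζ : F m) (hζ0 : ζ ≠ 0) (hζ1 : ζ ≠ 1) :
    ∃ v : F m, tr m v = 0 ∧ tr m (ζ*v) = 1 := by
  have h2 : (2 : F m) = 0 := two_eq_zero
  obtain ⟨y1, hy1⟩ := exists_tr_one (m := m)
  have hmul : ∀ b : F m, b ≠ 0 → ∃ x, tr m (b*x) = 1 := fun b hb =>
    ⟨b⁻¹*y1, by rw [← mul_assoc, mul_inv_cancel₀ hb, one_mul]; exact hy1⟩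
  have hne1 : ∀ a : ZMod 2, a ≠ 0 → a = 1 := by decide
  have hone : (1:ZMod 2) + 1 = 0 := by decide
  have h1ζ : (1 + ζ) ≠ 0 := fun h => hζ1 (by linear_combination h - h2)
  obtain ⟨u, hu⟩ := hmul (1+ζ) h1ζ
  have hsum : tr m u + tr m (ζ*u) = 1 := by
    rw [← tr_add, show u + ζ*u = (1+ζ)*u by ring]; exact hu
  by_cases h : tr m u = 0
  · exact ⟨u, h, by rwa [h, zero_add] at hsum⟩
  · have hu1 : tr m u = 1 := hne1 _ h
    have hζu : tr m (ζ*u) = 0 := by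
      rw [hu1] at hsum
      have : ∀ a : ZMod 2, 1 + a = 1 → a = 0 := by decide
      exact this _ hsum
    obtain ⟨w, hw⟩ := hmul ζ hζ0
    by_cases h' : tr m w = 0
    · exact ⟨w, h', hw⟩
    · refine ⟨u + w, ?_, ?_⟩
      · rw [tr_add, hu1, hne1 _ h', hone]
      · rw [mul_add, tr_add, hζu, hw, zero_add]

lemma chi_flip (a : ZMod 2) : (-1:ℤ)^((a+1).val) = -(-1)^a.val := by revert a; decide

lemma sum_tr_one_chi [Fintype (F m)] (ζ : F m) (hζ0 : ζ ≠ 0) (hζ1 : ζ ≠ 1) :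
    ∑ v ∈ univ.filter (fun v : F m => tr m v = 1), (-1:ℤ)^(tr m (ζ*v)).val = 0 := by
  classical
  have h2 : (2 : F m) = 0 := two_eq_zero
  obtain ⟨v0, hv0, hζv0⟩ := exists_v0 ζ hζ0 hζ1
  set T1 := univ.filter (fun v : F m => tr m v = 1) with hT1
  have hself : ∀ v : F m, v + v0 + v0 = v := fun v => by linear_combination v0 * h2
  have hmem : ∀ v ∈ T1, v + v0 ∈ T1 := by
    intro v hv
    rw [hT1, mem_filter] at hv ⊢
    exact ⟨mem_univ _, by rw [tr_add, hv.2, hv0, add_zero]⟩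
  have hstep : ∑ v ∈ T1, (-1:ℤ)^(tr m (ζ*v)).val
      = ∑ v ∈ T1, (-1:ℤ)^(tr m (ζ*(v+v0))).val := by
    refine Finset.sum_nbij' (i := fun v => v + v0) (j := fun v => v + v0) ?_ ?_ ?_ ?_ ?_
    all_goals intro v hv
    · exact hmem v hv
    · exact hmem v hv
    · exact hself v
    · exact hself v
    · rw [hself v]
  have hpt : ∀ v : F m, (-1:ℤ)^(tr m (ζ*(v+v0))).val = -(-1:ℤ)^(tr m (ζ*v)).val := by
    intro v
    rw [mul_add, tr_add, hζv0, chi_flip]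
  rw [Finset.sum_congr rfl (fun v _ => hpt v)] at hstep
  rw [Finset.sum_neg_distrib] at hstep
  linarith

lemma vanish [Fintype (F m)] [DecidableEq (F m)] (σ ζ : F m) (hσ : σ ≠ 0)
    (hzz : ζ^2 + ζ = σ^2) (hζ0 : ζ ≠ 0) (hζ1 : ζ ≠ 1) :
    ∑ x ∈ (univ.erase (0 : F m)).filter (fun x => tr m (σ*x) = 1),
      (-1:ℤ)^(tr m ((σ*ζ)*x + x⁻¹)).val = 0 := by
  set T1 := univ.filter (fun v : F m => tr m v = 1) with hT1
  have hT1mem : ∀ v : F m, v ∈ T1 ↔ tr m v = 1 := by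
    intro v; rw [hT1, mem_filter]; simp
  have step1 : ∑ x ∈ (univ.erase (0 : F m)).filter (fun x => tr m (σ*x) = 1),
      (-1:ℤ)^(tr m ((σ*ζ)*x + x⁻¹)).val
      = ∑ y ∈ T1, (-1:ℤ)^(tr m (ζ*y + σ*y⁻¹)).val := by
    refine Finset.sum_nbij' (i := fun x => σ*x) (j := fun y => σ⁻¹*y) ?_ ?_ ?_ ?_ ?_
    · intro x hx
      rw [mem_filter] at hx
      rw [hT1mem]
      exact hx.2
    · intro y hy
      rw [hT1mem] at hy
      have hy0 : y ≠ 0 := tr_one_ne_zero y hy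
      rw [mem_filter, mem_erase]
      refine ⟨⟨by simp [hσ, hy0], mem_univ _⟩, ?_⟩
      rw [show σ*(σ⁻¹*y) = y by field_simp]
      exact hy
    · intro x hx
      field_simp
    · intro y hy
      field_simp
    · intro x hx
      rw [mem_filter, mem_erase] at hx
      have hx0 : x ≠ 0 := hx.1.1
      have harg : σ*ζ*x + x⁻¹ = ζ*(σ*x) + σ*(σ*x)⁻¹ := by
        field_simp
      show (-1:ℤ)^(tr m (σ*ζ*x + x⁻¹)).val = (-1:ℤ)^(tr m (ζ*(σ*x) + σ*(σ*x)⁻¹)).val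
      rw [harg]
  have step2 : ∑ y ∈ T1, (-1:ℤ)^(tr m (ζ*y + σ*y⁻¹)).val
      = ∑ y ∈ T1, (-1:ℤ)^(tr m (ζ*(y + y⁻¹ + (y⁻¹)^2))).val := by
    refine Finset.sum_congr rfl (fun y hy => ?_)
    rw [hT1mem] at hy
    congr 2
    rw [tr_add, tr_split σ ζ hzz y⁻¹, mul_add, mul_add, tr_add, tr_add]
    ring
  have hinj : Set.InjOn (fun y : F m => y + y⁻¹ + (y⁻¹)^2) T1 := by
    intro y hy z hz h
    rw [coe_filter] at hy hz
    exact g_inj y z (by simpa using hy) (by simpa using hz) h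
  have himg : T1.image (fun y : F m => y + y⁻¹ + (y⁻¹)^2) = T1 := by
    apply Finset.eq_of_subset_of_card_le
    · intro v hv
      rw [Finset.mem_image] at hv
      obtain ⟨y, hy, rfl⟩ := hv
      rw [hT1mem] at hy ⊢
      have hy0 : y ≠ 0 := tr_one_ne_zero y hy
      rw [add_assoc, tr_add]
      have : tr m (y⁻¹ + (y⁻¹)^2) = 0 := by
        rw [add_comm]; exact tr_artin_schreier y⁻¹
      rw [this, add_zero]; exact hy
    · rw [Finset.card_image_of_injOn hinj]
  have step3 : ∑ y ∈ T1, (-1:ℤ)^(tr m (ζ*(y + y⁻¹ + (y⁻¹)^2))).val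
      = ∑ v ∈ T1, (-1:ℤ)^(tr m (ζ*v)).val := by
    rw [← Finset.sum_image (f := fun v => (-1:ℤ)^(tr m (ζ*v)).val)
      (fun x hx y hy h => hinj hx hy h), himg]
  rw [step1, step2, step3]
  exact sum_tr_one_chi ζ hζ0 hζ1

/-- The central identity: `K(s) = K(p)` whenever `s·p = (s+p)⁴`. -/
lemma key (s p : F m) (hsp : s * p = (s+p)^4) : Kl m s = Kl m p := by
  letI : Fintype (F m) := Fintype.ofFinite (F m)
  letI : DecidableEq (F m) := Classical.decEq (F m)
  rcases eq_or_ne s p with rfl | hne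
  · rfl
  have h2 : (2 : F m) = 0 := two_eq_zero
  have hσ : s + p ≠ 0 := fun h => hne (by linear_combination h - p*h2)
  have hs0 : s ≠ 0 := by
    intro h
    apply hσ
    have h4 : (s+p)^4 = 0 := by rw [← hsp, h, zero_mul]
    exact pow_eq_zero_iff (by norm_num) |>.mp h4
  have hp0 : p ≠ 0 := by
    intro h
    apply hσ
    have h4 : (s+p)^4 = 0 := by rw [← hsp, h, mul_zero]
    exact pow_eq_zero_iff (by norm_num) |>.mp h4
  have hζ0 : s/(s+p) ≠ 0 := div_ne_zero hs0 hσ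
  have hζ1 : s/(s+p) ≠ 1 := by
    intro h
    rw [div_eq_one_iff_eq hσ] at h
    exact hp0 (by linear_combination -h)
  have hζ1' : s/(s+p) + 1 ≠ 0 := fun h => hζ1 (by linear_combination h - h2)
  have hζ1'' : s/(s+p) + 1 ≠ 1 := fun h => hζ0 (by linear_combination h)
  have hsζ : (s+p) * (s/(s+p)) = s := by field_simp
  have hpζ : (s+p) * (s/(s+p) + 1) = p := by
    rw [mul_add, hsζ, mul_one]
    linear_combination s*h2
  have hzz : (s/(s+p))^2 + s/(s+p) = (s+p)^2 := by
    field_simp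
    linear_combination (s+p)*hsp + (s^2*(s+p))*h2 + (s + p + 1)*hsp
      + (-s*p^2 + 5*s*p^4 + s^2 - 2*s^2*p + 10*s^2*p^3 - s^3 + 10*s^3*p^2 + 5*s^4*p + s^5 + p^5)*h2
  have hzz' : (s/(s+p) + 1)^2 + (s/(s+p) + 1) = (s+p)^2 := by
    linear_combination hzz + (s/(s+p))*h2 + h2
  have hKl : ∀ a : F m, Kl m a = ∑ x ∈ (univ.erase (0:F m)),
      (-1:ℤ)^(tr m (a*x+x⁻¹)).val := fun a => rfl
  rw [hKl, hKl]
  rw [← sum_filter_add_sum_filter_not (univ.erase (0:F m)) (fun x => tr m ((s+p)*x) = 1)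
      (fun x => (-1:ℤ)^(tr m (s*x+x⁻¹)).val),
      ← sum_filter_add_sum_filter_not (univ.erase (0:F m)) (fun x => tr m ((s+p)*x) = 1)
      (fun x => (-1:ℤ)^(tr m (p*x+x⁻¹)).val)]
  have hv1 : ∑ x ∈ (univ.erase (0:F m)).filter (fun x => tr m ((s+p)*x) = 1),
      (-1:ℤ)^(tr m (s*x+x⁻¹)).val = 0 := by
    have := vanish (s+p) (s/(s+p)) hσ hzz hζ0 hζ1
    rw [hsζ] at this
    exact this
  have hv2 : ∑ x ∈ (univ.erase (0:F m)).filter (fun x => tr m ((s+p)*x) = 1),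
      (-1:ℤ)^(tr m (p*x+x⁻¹)).val = 0 := by
    have := vanish (s+p) (s/(s+p) + 1) hσ hzz' hζ1' hζ1''
    rw [hpζ] at this
    exact this
  rw [hv1, hv2]
  congr 1
  refine Finset.sum_congr rfl (fun x hx => ?_)
  rw [mem_filter] at hx
  have h0 : tr m ((s+p)*x) = 0 := by
    have hd : ∀ a : ZMod 2, ¬(a = 1) → a = 0 := by decide
    exact hd _ hx.2
  have harg : p*x + x⁻¹ = s*x + x⁻¹ + (s+p)*x := by
    linear_combination (-(s*x))*h2
  have h3 : tr m (p * x + x⁻¹) = tr m (s * x + x⁻¹) := by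
    have h4 := tr_add (s*x + x⁻¹) ((s+p)*x)
    rw [h0, add_zero] at h4
    rw [harg, h4]
  rw [h3]

end KlAux

theorem kloosterman_cn (m : ℕ) (hm : 0 < m) (c : GaloisField 2 m) (n : ℤ)
    (hc : n < 0 → c ≠ 0) (h : c ^ (4 * n) + 1 ≠ 0) :
    Kl m ((c ^ (n + 1) + c ^ n) ^ 3 * (c ^ (n + 1) + 1) / (c ^ (4 * n) + 1))
      = Kl m ((c ^ (n + 1) + c ^ n) * (c ^ (n + 1) + 1) ^ 3 / (c ^ (4 * n) + 1)) := by
  have h2 : (2 : GaloisField 2 m) = 0 := KlAux.two_eq_zero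
  by_cases hc0 : c = 0
  · subst hc0
    rcases eq_or_lt_of_le (not_lt.mp (fun hn => hc hn rfl)) with hn | hn
    · exfalso
      subst hn
      apply h
      rw [mul_zero, zpow_zero]
      linear_combination h2
    · have e1 : (0:GaloisField 2 m) ^ (n+1) = 0 := zero_zpow _ (by omega)
      have e2 : (0:GaloisField 2 m) ^ n = 0 := zero_zpow _ (by omega)
      rw [e1, e2]
      norm_num
  · have h4n : c ^ (4*n) = (c ^ n)^4 := by
      rw [show (4*n : ℤ) = n * 4 by ring, zpow_mul]
      norm_cast
    have hv1 : c ^ n + 1 ≠ 0 := by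
      intro hv
      apply h
      have hcn : c ^ n = 1 := by linear_combination hv - h2
      rw [h4n, hcn]
      linear_combination h2
    have hD : c ^ (4*n) + 1 = (c ^ n + 1)^4 := by
      rw [h4n]
      linear_combination (-(2*(c^n)^3 + 3*(c^n)^2 + 2*(c^n)))*h2
    apply KlAux.key
    rw [hD]
    set α := c^(n+1) + c^n with hα
    set β := c^(n+1) + 1 with hβ
    set γ := c^n + 1 with hγ
    have hγ0 : γ ≠ 0 := hv1
    have h4 : γ^4 ≠ 0 := pow_ne_zero _ hγ0
    have hαβ : α + β = γ := by
      rw [hα, hβ, hγ]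
      linear_combination (c^(n+1))*h2
    have hnum : α^3*β + α*β^3 = α*β*γ^2 := by
      linear_combination (α*β*(α+β+γ))*hαβ - α^2*β^2*h2
    rw [← add_div, hnum, div_pow, div_mul_div_comm,
        div_eq_div_iff (mul_ne_zero h4 h4) (pow_ne_zero 4 h4)]
    ring
end

section
/- For every c ∈ F with c ≠ 0 and c⁷ ≠ 1, K((c+1)²⁰(c⁸+c)) = K((c+1)⁴(c⁸+c)³). -/
section Aux

/-- Abbreviation for the absolute trace. -/
noncomputable def tr (m : ℕ) (w : GaloisField 2 m) : ZMod 2 :=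
  Algebra.trace (ZMod 2) (GaloisField 2 m) w

/-- The character `(-1)^Tr`. -/
noncomputable def eps (m : ℕ) (w : GaloisField 2 m) : ℤ :=
  (-1 : ℤ) ^ (tr m w).val

lemma two_eq_zeroF (m : ℕ) : (2 : GaloisField 2 m) = 0 := by
  have := CharP.cast_eq_zero (GaloisField 2 m) 2
  exact_mod_cast this

lemma add_selfF (m : ℕ) (x : GaloisField 2 m) : x + x = 0 := by
  linear_combination x * two_eq_zeroF m

/-- The Frobenius `x ↦ x^2` as a `ZMod 2`-linear map. -/
noncomputable def frobLin (m : ℕ) :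
    GaloisField 2 m →ₗ[ZMod 2] GaloisField 2 m where
  toFun x := x ^ 2
  map_add' a b := by
    show (a + b) ^ 2 = a ^ 2 + b ^ 2
    rw [add_pow_char]
  map_smul' r x := by
    simp only [RingHom.id_apply]
    rw [Algebra.smul_def, Algebra.smul_def, mul_pow, ← map_pow]
    have hr : r ^ 2 = r := by revert r; decide
    rw [hr]

lemma frobLin_bij (m : ℕ) : Function.Bijective (frobLin m) := by
  have hinj : Function.Injective (frobLin m) := by
    intro a b hab
    exact frobenius_inj (GaloisField 2 m) 2 hab
  exact (Finite.injective_iff_bijective).mp hinj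

/-- Trace is invariant under squaring. -/
lemma tr_sq (m : ℕ) (w : GaloisField 2 m) : tr m (w ^ 2) = tr m w := by
  classical
  let e : GaloisField 2 m ≃ₗ[ZMod 2] GaloisField 2 m :=
    LinearEquiv.ofBijective (frobLin m) (frobLin_bij m)
  have key : (Algebra.lmul (ZMod 2) (GaloisField 2 m)) (w ^ 2)
      = e.conj ((Algebra.lmul (ZMod 2) (GaloisField 2 m)) w) := by
    apply LinearMap.ext
    intro y
    have h1 : e.conj ((Algebra.lmul (ZMod 2) (GaloisField 2 m)) w) y
        = e (w * e.symm y) := rfl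
    have h2 : e (w * e.symm y) = (w * e.symm y) ^ 2 := rfl
    have h3 : (e.symm y) ^ 2 = y := e.apply_symm_apply y
    have h4 : (Algebra.lmul (ZMod 2) (GaloisField 2 m)) (w ^ 2) y = w ^ 2 * y := rfl
    rw [h4, h1, h2, mul_pow, h3]
  unfold tr
  rw [Algebra.trace_apply, Algebra.trace_apply, key, LinearMap.trace_conj']

/-- Existence of an element of trace 1. -/
lemma exists_tr_one (m : ℕ) : ∃ w : GaloisField 2 m, tr m w = 1 := by
  obtain ⟨w, hw⟩ := Algebra.trace_surjective (ZMod 2) (GaloisField 2 m) 1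
  exact ⟨w, hw⟩

lemma eps_add (m : ℕ) (a b : GaloisField 2 m) :
    eps m (a + b) = eps m a * eps m b := by
  unfold eps
  rw [show tr m (a + b) = tr m a + tr m b from map_add _ a b]
  exact (by decide : ∀ u v : ZMod 2,
    (-1 : ℤ) ^ (u + v).val = (-1 : ℤ) ^ u.val * (-1 : ℤ) ^ v.val) _ _

lemma eps_sq (m : ℕ) (a : GaloisField 2 m) : eps m (a ^ 2) = eps m a := by
  unfold eps; rw [tr_sq]

lemma eps_zero (m : ℕ) : eps m 0 = 1 := by
  unfold eps
  rw [show tr m 0 = 0 from map_zero _]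
  rfl

lemma eps_of_tr_one (m : ℕ) {x : GaloisField 2 m} (h : tr m x = 1) :
    eps m x = -1 := by
  unfold eps; rw [h]; rfl

lemma eps_of_tr_zero (m : ℕ) {x : GaloisField 2 m} (h : tr m x = 0) :
    eps m x = 1 := by
  unfold eps; rw [h]; rfl

lemma tr_zero_val (m : ℕ) : tr m 0 = 0 := map_zero _

lemma ne_zero_of_tr_one (m : ℕ) {x : GaloisField 2 m} (h : tr m x = 1) :
    x ≠ 0 := by
  rintro rfl
  rw [tr_zero_val] at h
  exact (by decide : (0 : ZMod 2) ≠ 1) h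

end Aux

/-- The key combinatorial fact: if `x ≠ y` are nonzero elements with
`(1/x+1/y)² = x+y+1/x+1/y`, then `Tr x = 0`. -/
lemma key_claim (m : ℕ) (x y : GaloisField 2 m)
    (hx0 : x ≠ 0) (hy0 : y ≠ 0) (hne : x ≠ y)
    (hCB : (x⁻¹ + y⁻¹) ^ 2 = x + y + x⁻¹ + y⁻¹) :
    tr m x = 0 := by
  have h2 : (2 : GaloisField 2 m) = 0 := two_eq_zeroF m
  have hp : x + y ≠ 0 := by
    intro h
    apply hne
    have : x = x + (y + y) := by rw [add_selfF, add_zero]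
    rw [this, ← add_assoc, h, zero_add]
  have hn : x * y ≠ 0 := mul_ne_zero hx0 hy0
  have e1 : (x⁻¹ + y⁻¹) * (x * y) = x + y := by
    field_simp
    ring
  have e1' : (x⁻¹ + y⁻¹) * (x * y) ^ 2 = (x + y) * (x * y) := by
    rw [pow_two, ← mul_assoc, e1]
  have e3 : (x + y) ^ 2 = (x + y + x⁻¹ + y⁻¹) * (x * y) ^ 2 := by
    linear_combination (-((x⁻¹ + y⁻¹) * (x * y) + x + y)) * e1 + (x * y) ^ 2 * hCB
  have hq : (x + y) * (x + y) = (x + y) * ((x * y) ^ 2 + x * y) := by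
    linear_combination e3 + e1'
  have hpn : x + y = (x * y) ^ 2 + x * y := mul_left_cancel₀ hp hq
  have hn1 : x * y + 1 ≠ 0 := by
    intro h
    have hxy1 : x * y = 1 := by linear_combination h - h2
    apply hp
    rw [hpn, hxy1]
    linear_combination h2
  set t : GaloisField 2 m := (x * y + 1)⁻¹ with ht
  set σ : GaloisField 2 m := t * (x ^ 2 * y + 1) with hσ
  have htn : t * (x * y + 1) = 1 := inv_mul_cancel₀ hn1
  have s1 : σ * (x * y + 1) = x ^ 2 * y + 1 := by
    rw [hσ]
    linear_combination (x ^ 2 * y + 1) * htn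
  have s2 : (σ ^ 2 + σ) * (x * y + 1) ^ 2
      = (x ^ 2 * y + 1) ^ 2 + (x ^ 2 * y + 1) * (x * y + 1) := by
    linear_combination (σ * (x * y + 1) + (x ^ 2 * y + 1) + (x * y + 1)) * s1
  have s3 : x ^ 2 * (x * y + 1) ^ 2
      = (x ^ 2 * y + 1) ^ 2 + (x ^ 2 * y + 1) * (x * y + 1) := by
    linear_combination (-x) * hpn
      + (x ^ 3 * y + x ^ 2 - 2 * x ^ 2 * y - x ^ 3 * y ^ 2 - 1) * h2
  have s4 : x ^ 2 * (x * y + 1) ^ 2 = (σ ^ 2 + σ) * (x * y + 1) ^ 2 := by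
    linear_combination s3 - s2
  have s5 : x ^ 2 = σ ^ 2 + σ := mul_right_cancel₀ (pow_ne_zero 2 hn1) s4
  have : tr m x = tr m (x ^ 2) := (tr_sq m x).symm
  rw [this, s5, show tr m (σ ^ 2 + σ) = tr m (σ ^ 2) + tr m σ from map_add _ _ _,
    tr_sq]
  exact (by decide : ∀ a : ZMod 2, a + a = 0) _

/-- The master identity: `K(v²(v²+v)) = K((v²+1)(v²+v))` for every `v`.
This is the Helleseth–Zinoviev identity `K(v³(v+1)) = K(v(v+1)³)`. -/
theorem HZ_main (m : ℕ) (v : GaloisField 2 m) :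
    Kl m (v ^ 2 * (v ^ 2 + v)) = Kl m ((v ^ 2 + 1) * (v ^ 2 + v)) := by
  letI : Fintype (GaloisField 2 m) := Fintype.ofFinite (GaloisField 2 m)
  letI : DecidableEq (GaloisField 2 m) := Classical.decEq (GaloisField 2 m)
  have h2 : (2 : GaloisField 2 m) = 0 := two_eq_zeroF m
  have hxx : ∀ z : GaloisField 2 m, z + z = 0 := add_selfF m
  by_cases hs : v ^ 2 + v = 0
  · rw [hs, mul_zero, mul_zero]
  -- nontrivial case
  have hv0 : v ≠ 0 := by rintro rfl; simp at hs
  have hv1 : v ≠ 1 := by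
    rintro rfl
    exact hs (by linear_combination h2)
  -- Kl unfolds
  have hkl : ∀ a : GaloisField 2 m, Kl m a =
      ∑ x ∈ Finset.univ.erase (0 : GaloisField 2 m), eps m (a * x + x⁻¹) := by
    intro a
    unfold Kl eps tr
    rfl
  -- reindexing lemma
  have hre : ∀ A : GaloisField 2 m, Kl m (A * (v ^ 2 + v)) =
      ∑ x ∈ Finset.univ.erase (0 : GaloisField 2 m),
        eps m (A * x + (v ^ 2 + v) * x⁻¹) := by
    intro A
    rw [hkl]
    refine Finset.sum_nbij' (i := fun u => (v ^ 2 + v) * u)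
      (j := fun x => (v ^ 2 + v)⁻¹ * x) ?_ ?_ ?_ ?_ ?_
    · intro u hu
      rw [Finset.mem_erase] at hu ⊢
      exact ⟨mul_ne_zero hs hu.1, Finset.mem_univ _⟩
    · intro x hx
      rw [Finset.mem_erase] at hx ⊢
      exact ⟨mul_ne_zero (inv_ne_zero hs) hx.1, Finset.mem_univ _⟩
    · intro u _
      rw [inv_mul_cancel_left₀ hs]
    · intro x _
      rw [mul_inv_cancel_left₀ hs]
    · intro u hu
      rw [Finset.mem_erase] at hu
      congr 1
      have hinv : (v ^ 2 + v) * ((v ^ 2 + v) * u)⁻¹ = u⁻¹ := by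
        rw [mul_inv_rev, mul_comm u⁻¹, ← mul_assoc, mul_inv_cancel₀ hs, one_mul]
      rw [hinv]
      ring
  -- the set D of trace-one elements
  set D : Finset (GaloisField 2 m) := Finset.univ.filter (fun x => tr m x = 1)
    with hD
  have hmemD : ∀ x ∈ D, x ≠ 0 ∧ tr m x = 1 := by
    intro x hx
    rw [hD, Finset.mem_filter] at hx
    exact ⟨ne_zero_of_tr_one m hx.2, hx.2⟩
  -- S w
  set S : GaloisField 2 m → ℤ :=
    fun w => ∑ x ∈ D, eps m (w ^ 2 * x + (w ^ 2 + w) * x⁻¹) with hSdef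
  -- Step I : Kl a - Kl b = 2 * S v
  have stepI : Kl m (v ^ 2 * (v ^ 2 + v)) - Kl m ((v ^ 2 + 1) * (v ^ 2 + v))
      = 2 * S v := by
    rw [hre (v ^ 2), hre (v ^ 2 + 1), ← Finset.sum_sub_distrib]
    have hpt : ∀ x ∈ Finset.univ.erase (0 : GaloisField 2 m),
        eps m (v ^ 2 * x + (v ^ 2 + v) * x⁻¹)
          - eps m ((v ^ 2 + 1) * x + (v ^ 2 + v) * x⁻¹)
        = eps m (v ^ 2 * x + (v ^ 2 + v) * x⁻¹) * (1 - eps m x) := by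
      intro x _
      have harg : (v ^ 2 + 1) * x + (v ^ 2 + v) * x⁻¹
          = (v ^ 2 * x + (v ^ 2 + v) * x⁻¹) + x := by ring
      rw [harg, eps_add m (v ^ 2 * x + (v ^ 2 + v) * x⁻¹) x]
      ring
    rw [Finset.sum_congr rfl hpt]
    rw [← Finset.sum_filter_add_sum_filter_not
      (Finset.univ.erase (0 : GaloisField 2 m)) (fun x => tr m x = 1)]
    have hze : ∑ x ∈ (Finset.univ.erase (0 : GaloisField 2 m)).filter
        (fun x => ¬ tr m x = 1),
        eps m (v ^ 2 * x + (v ^ 2 + v) * x⁻¹) * (1 - eps m x) = 0 := by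
      apply Finset.sum_eq_zero
      intro x hx
      rw [Finset.mem_filter] at hx
      have h0 : tr m x = 0 := by
        have h1 := hx.2
        revert h1
        generalize tr m x = a
        revert a
        decide
      rw [eps_of_tr_zero m h0]
      ring
    rw [hze, add_zero]
    have hDeq : (Finset.univ.erase (0 : GaloisField 2 m)).filter
        (fun x => tr m x = 1) = D := by
      rw [hD]
      ext x
      simp only [Finset.mem_filter, Finset.mem_erase, Finset.mem_univ, true_and,
        and_true]
      constructor
      · exact fun h => h.2
      · exact fun h => ⟨ne_zero_of_tr_one m h, h⟩
    rw [hDeq]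
    simp only [hSdef]
    rw [Finset.mul_sum]
    apply Finset.sum_congr rfl
    intro x hx
    rw [eps_of_tr_one m (hmemD x hx).2]
    ring
  -- trace-one element
  obtain ⟨w₀, hw₀⟩ := exists_tr_one m
  have hw₀0 : w₀ ≠ 0 := ne_zero_of_tr_one m hw₀
  -- orthogonality
  have orth : ∀ B C : GaloisField 2 m,
      (∑ w : GaloisField 2 m, eps m (w ^ 2 * C + w * B))
      = if B ^ 2 = C then (Fintype.card (GaloisField 2 m) : ℤ) else 0 := by
    intro B C
    obtain ⟨γ, hγ⟩ : ∃ γ : GaloisField 2 m, γ ^ 2 = C :=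
      (frobLin_bij m).surjective C
    have hpt : ∀ w : GaloisField 2 m,
        eps m (w ^ 2 * C + w * B) = eps m (w * (γ + B)) := by
      intro w
      have harg : w ^ 2 * C + w * B = (w * γ) ^ 2 + w * B := by
        rw [← hγ]; ring
      rw [harg, eps_add, eps_sq, ← eps_add]
      congr 1
      ring
    rw [Finset.sum_congr rfl (fun w _ => hpt w)]
    by_cases hBC : B ^ 2 = C
    · have hγB : γ = B := by
        have hsq : (γ - B) ^ 2 = 0 := by
          linear_combination hγ + hBC + (C - γ * B) * h2
        have h0 := pow_eq_zero_iff (n := 2) (by norm_num) |>.mp hsq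
        exact sub_eq_zero.mp h0
      rw [if_pos hBC]
      have hz : γ + B = 0 := by
        rw [hγB]; exact hxx B
      have : ∀ w : GaloisField 2 m, eps m (w * (γ + B)) = 1 := by
        intro w
        rw [hz, mul_zero, eps_zero]
      rw [Finset.sum_congr rfl (fun w _ => this w)]
      simp [Finset.card_univ]
    · rw [if_neg hBC]
      have hδ : γ + B ≠ 0 := by
        intro h
        apply hBC
        have hγB : γ = B := by
          have : γ = γ + (B + B) := by rw [hxx, add_zero]
          rw [this, ← add_assoc, h, zero_add]
        rw [← hγ, hγB]
      set δ : GaloisField 2 m := γ + B with hδdef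
      have hw1 : δ⁻¹ * w₀ ≠ 0 := mul_ne_zero (inv_ne_zero hδ) hw₀0
      apply Finset.sum_ninvolution (g := fun a => a + δ⁻¹ * w₀)
      · intro a
        have harg : (a + δ⁻¹ * w₀) * δ = a * δ + w₀ := by
          have hinv : δ⁻¹ * δ = 1 := inv_mul_cancel₀ hδ
          linear_combination w₀ * hinv
        rw [harg, eps_add, eps_of_tr_one m hw₀]
        ring
      · intro a h
        intro heq
        apply hw1
        have := congrArg (fun z => z - a) heq
        simpa using this
      · intro a; exact Finset.mem_univ _
      · intro a
        rw [add_assoc, hxx, add_zero]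
  -- master sum computation
  have master : (∑ w : GaloisField 2 m, (S w) ^ 2)
      = (Fintype.card (GaloisField 2 m) : ℤ) * D.card := by
    have expand : ∀ w : GaloisField 2 m, (S w) ^ 2
        = ∑ x ∈ D, ∑ y ∈ D,
            eps m (w ^ 2 * (x + y + x⁻¹ + y⁻¹) + w * (x⁻¹ + y⁻¹)) := by
      intro w
      simp only [hSdef]
      rw [pow_two, Finset.sum_mul_sum]
      apply Finset.sum_congr rfl
      intro x _
      apply Finset.sum_congr rfl
      intro y _
      rw [← eps_add]
      congr 1
      ring
    rw [Finset.sum_congr rfl (fun w _ => expand w)]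
    rw [Finset.sum_comm]
    have inner : ∀ x ∈ D, (∑ w : GaloisField 2 m, ∑ y ∈ D,
        eps m (w ^ 2 * (x + y + x⁻¹ + y⁻¹) + w * (x⁻¹ + y⁻¹)))
        = (Fintype.card (GaloisField 2 m) : ℤ) := by
      intro x hx
      rw [Finset.sum_comm]
      have hyval : ∀ y ∈ D, (∑ w : GaloisField 2 m,
          eps m (w ^ 2 * (x + y + x⁻¹ + y⁻¹) + w * (x⁻¹ + y⁻¹)))
          = if y = x then (Fintype.card (GaloisField 2 m) : ℤ) else 0 := by
        intro y hy
        rw [orth (x⁻¹ + y⁻¹) (x + y + x⁻¹ + y⁻¹)]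
        congr 1
        · -- condition iff
          rw [eq_iff_iff]
          constructor
          · intro hc
            by_contra hne
            have h0 := key_claim m x y (hmemD x hx).1 (hmemD y hy).1
              (fun h => hne (h ▸ rfl)) hc
            rw [(hmemD x hx).2] at h0
            exact (by decide : (1 : ZMod 2) ≠ 0) h0
          · rintro rfl
            rw [hxx y, zero_add, hxx y⁻¹]
            norm_num
      rw [Finset.sum_congr rfl hyval]
      rw [Finset.sum_ite_eq' D x (fun _ => (Fintype.card (GaloisField 2 m) : ℤ))]
      rw [if_pos hx]
    rw [Finset.sum_congr rfl inner, Finset.sum_const, nsmul_eq_mul]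
    ring
  -- card F = 2 * card D
  have hcard : (Fintype.card (GaloisField 2 m) : ℤ) = 2 * D.card := by
    have hsplit := Finset.card_filter_add_card_filter_not
      (s := (Finset.univ : Finset (GaloisField 2 m))) (p := fun x => tr m x = 1)
    have hbij : (Finset.univ.filter (fun x : GaloisField 2 m => ¬ tr m x = 1)).card
        = D.card := by
      apply Finset.card_bij (i := fun x _ => x + w₀)
      · intro a ha
        rw [Finset.mem_filter] at ha
        have h0 : tr m a = 0 := by
          have h1 := ha.2
          revert h1
          generalize tr m a = b
          revert b
          decide
        rw [hD, Finset.mem_filter]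
        refine ⟨Finset.mem_univ _, ?_⟩
        rw [show tr m (a + w₀) = tr m a + tr m w₀ from map_add _ _ _, h0, hw₀]
        rfl
      · intro a ha b hb hab
        exact add_right_cancel hab
      · intro b hb
        rw [hD, Finset.mem_filter] at hb
        refine ⟨b + w₀, ?_, ?_⟩
        · rw [Finset.mem_filter]
          refine ⟨Finset.mem_univ _, ?_⟩
          rw [show tr m (b + w₀) = tr m b + tr m w₀ from map_add _ _ _, hb.2, hw₀]
          decide
        · rw [add_assoc, hxx, add_zero]
      -- done
    have : Fintype.card (GaloisField 2 m) = D.card + D.card := by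
      rw [← Finset.card_univ, ← hsplit, hbij]
    rw [this]
    push_cast
    ring
  -- S 0 and S 1
  have hS0 : S 0 = (D.card : ℤ) := by
    simp only [hSdef]
    have : ∀ x ∈ D, eps m ((0 : GaloisField 2 m) ^ 2 * x + (0 ^ 2 + 0) * x⁻¹)
        = 1 := by
      intro x _
      have harg : (0 : GaloisField 2 m) ^ 2 * x + (0 ^ 2 + 0) * x⁻¹ = 0 := by ring
      rw [harg, eps_zero]
    rw [Finset.sum_congr rfl this, Finset.sum_const, nsmul_eq_mul, mul_one]
  have hS1 : S 1 = -(D.card : ℤ) := by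
    simp only [hSdef]
    have : ∀ x ∈ D, eps m ((1 : GaloisField 2 m) ^ 2 * x + (1 ^ 2 + 1) * x⁻¹)
        = -1 := by
      intro x hx
      have harg : (1 : GaloisField 2 m) ^ 2 * x + (1 ^ 2 + 1) * x⁻¹ = x := by
        linear_combination x⁻¹ * h2
      rw [harg, eps_of_tr_one m (hmemD x hx).2]
    rw [Finset.sum_congr rfl this, Finset.sum_const, nsmul_eq_mul]
    ring
  -- extract S v = 0
  have h1mem : (1 : GaloisField 2 m) ∈ Finset.univ.erase (0 : GaloisField 2 m) :=
    Finset.mem_erase.mpr ⟨one_ne_zero, Finset.mem_univ _⟩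
  have hsplit0 : (∑ w : GaloisField 2 m, (S w) ^ 2)
      = (S 0) ^ 2 + ∑ w ∈ Finset.univ.erase (0 : GaloisField 2 m), (S w) ^ 2 :=
    (Finset.add_sum_erase _ _ (Finset.mem_univ 0)).symm
  have hsplit1 : (∑ w ∈ Finset.univ.erase (0 : GaloisField 2 m), (S w) ^ 2)
      = (S 1) ^ 2
        + ∑ w ∈ (Finset.univ.erase (0 : GaloisField 2 m)).erase 1, (S w) ^ 2 :=
    (Finset.add_sum_erase _ _ h1mem).symm
  have hrest : (∑ w ∈ (Finset.univ.erase (0 : GaloisField 2 m)).erase 1,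
      (S w) ^ 2) = 0 := by
    have := master
    rw [hsplit0, hsplit1, hS0, hS1, hcard] at this
    linarith
  have hSv2 : (S v) ^ 2 = 0 := by
    have hvmem : v ∈ (Finset.univ.erase (0 : GaloisField 2 m)).erase 1 := by
      rw [Finset.mem_erase, Finset.mem_erase]
      exact ⟨hv1, hv0, Finset.mem_univ _⟩
    have hnn : ∀ w ∈ (Finset.univ.erase (0 : GaloisField 2 m)).erase 1,
        (0 : ℤ) ≤ (S w) ^ 2 := fun w _ => sq_nonneg _
    exact (Finset.sum_eq_zero_iff_of_nonneg hnn).mp hrest v hvmem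
  have hSv : S v = 0 := by
    have := sq_eq_zero_iff.mp hSv2
    exact this
  have := stepI
  rw [hSv, mul_zero] at this
  linarith

theorem cor1_5 (m : ℕ) (hm : 0 < m) (c : GaloisField 2 m)
    (hc0 : c ≠ 0) (hc7 : c ^ 7 ≠ 1) :
    Kl m ((c + 1) ^ 20 * (c ^ 8 + c)) = Kl m ((c + 1) ^ 4 * (c ^ 8 + c) ^ 3) := by
  have h2 : (2 : GaloisField 2 m) = 0 := two_eq_zeroF m
  have e1 : (c + 1) ^ 20 * (c ^ 8 + c)
      = ((c + 1) ^ 7) ^ 2 * (((c + 1) ^ 7) ^ 2 + (c + 1) ^ 7) := by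
    linear_combination ((-4 : GaloisField 2 m) * c^27 + (-94) * c^26 + (-1068) * c^25 +
      (-7815) * c^24 + (-41388) * c^23 + (-168990) * c^22 + (-553260) * c^21 +
      (-1491068) * c^20 + (-3369480) * c^19 + (-6469272) * c^18 + (-10653680) * c^17 +
      (-15150315) * c^16 + (-18690072) * c^15 + (-20058300) * c^14 + (-18752088) * c^13 +
      (-15271440) * c^12 + (-10820500) * c^11 + (-6653838) * c^10 + (-3537420) * c^9 +
      (-1617037) * c^8 + (-630780) * c^7 + (-207750) * c^6 + (-56892) * c^5 +
      (-12660) * c^4 + (-2208) * c^3 + (-284) * c^2 + (-24) * c + (-1)) * h2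
  have e2 : (c + 1) ^ 4 * (c ^ 8 + c) ^ 3
      = (((c + 1) ^ 7) ^ 2 + 1) * (((c + 1) ^ 7) ^ 2 + (c + 1) ^ 7) := by
    linear_combination ((-12 : GaloisField 2 m) * c^27 + (-186) * c^26 + (-1636) * c^25 +
      (-10237) * c^24 + (-49140) * c^23 + (-188370) * c^22 + (-592019) * c^21 +
      (-1554057) * c^20 + (-3453546) * c^19 + (-6562214) * c^18 + (-10740081) * c^17 +
      (-15221052) * c^16 + (-18748212) * c^15 + (-20116439) * c^14 + (-18822826) * c^13 +
      (-15357879) * c^12 + (-10913624) * c^11 + (-6738412) * c^10 + (-3601416) * c^9 +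
      (-1657299) * c^8 + (-651876) * c^7 + (-217005) * c^6 + (-60323) * c^5 +
      (-13746) * c^4 + (-2502) * c^3 + (-350) * c^2 + (-35) * c + (-2)) * h2
  rw [e1, e2]
  exact HZ_main m ((c + 1) ^ 7)
end

section
/- For every b ∈ F with b ≠ 0, b ≠ 1, and every integer k, K((b^{k+1}+b²+b)(b^{k+1}+b²+1)³/(1+b)⁴) = K((b^{k+1}+b²+b)³(b^{k+1}+b²+1)/(1+b)⁴). -/
namespace Cor4Proof

/-- absolute trace -/
noncomputable def tr (m : ℕ) (x : GaloisField 2 m) : ZMod 2 :=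
  Algebra.trace (ZMod 2) (GaloisField 2 m) x

/-- quadratic character-like sign -/
noncomputable def chi (m : ℕ) (x : GaloisField 2 m) : ℤ :=
  (-1 : ℤ) ^ (tr m x).val

lemma h2F (m : ℕ) : (2 : GaloisField 2 m) = 0 := by
  have h := CharP.cast_eq_zero (GaloisField 2 m) 2
  exact_mod_cast h

lemma tr_add (m : ℕ) (x y : GaloisField 2 m) : tr m (x + y) = tr m x + tr m y :=
  map_add _ _ _

lemma tr_zero (m : ℕ) : tr m 0 = 0 := map_zero _

lemma zmod2_sq : ∀ c : ZMod 2, c ^ 2 = c := by decide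

lemma tr_sq (m : ℕ) (x : GaloisField 2 m) : tr m (x * x) = tr m x := by
  have hcomm : ∀ c : ZMod 2,
      (frobeniusEquiv (GaloisField 2 m) 2) ((algebraMap (ZMod 2) (GaloisField 2 m)) c)
        = (algebraMap (ZMod 2) (GaloisField 2 m)) c := by
    intro c
    rw [frobeniusEquiv_apply, frobenius_def, ← map_pow, zmod2_sq]
  let e : GaloisField 2 m ≃ₐ[ZMod 2] GaloisField 2 m :=
    AlgEquiv.ofRingEquiv (f := frobeniusEquiv (GaloisField 2 m) 2) hcomm
  have hex : e x = x * x := by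
    show (frobeniusEquiv (GaloisField 2 m) 2) x = x * x
    rw [frobeniusEquiv_apply, frobenius_def]; ring
  have h := Algebra.trace_eq_of_algEquiv e x
  rw [hex] at h
  exact h

lemma exists_tr_one (m : ℕ) : ∃ z : GaloisField 2 m, tr m z = 1 := by
  obtain ⟨z, hz⟩ := Algebra.trace_surjective (ZMod 2) (GaloisField 2 m) 1
  exact ⟨z, hz⟩

lemma zmod2_negpow_add : ∀ a b : ZMod 2,
    (-1 : ℤ) ^ (a + b).val = (-1 : ℤ) ^ a.val * (-1 : ℤ) ^ b.val := by decide

lemma chi_add (m : ℕ) (x y : GaloisField 2 m) :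
    chi m (x + y) = chi m x * chi m y := by
  unfold chi
  rw [tr_add, zmod2_negpow_add]

lemma chi_sq (m : ℕ) (x : GaloisField 2 m) : chi m (x * x) = chi m x := by
  unfold chi; rw [tr_sq]

lemma chi_tr0 (m : ℕ) {x : GaloisField 2 m} (h : tr m x = 0) : chi m x = 1 := by
  unfold chi; rw [h]; decide

lemma chi_tr1 (m : ℕ) {x : GaloisField 2 m} (h : tr m x = 1) : chi m x = -1 := by
  unfold chi; rw [h]; decide

lemma zmod2_not_one {a : ZMod 2} (h : ¬ a = 1) : a = 0 := by
  revert h; revert a; decide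

lemma zmod2_add_self (a : ZMod 2) : a + a = 0 := by revert a; decide

lemma keyA {F : Type*} [Field F] (u w : F) (hw : w ≠ 0) :
    u * (w + u) ^ 3 / w ^ 4 = (u / w) * (1 + u / w) ^ 3 := by
  have h1 : (1 : F) + u / w = (w + u) / w := by rw [add_div, div_self hw]
  rw [h1, div_pow, div_mul_div_comm]
  congr 1
  ring

lemma keyB {F : Type*} [Field F] (u w : F) (hw : w ≠ 0) :
    u ^ 3 * (w + u) / w ^ 4 = (u / w) ^ 3 * (1 + u / w) := by
  have h1 : (1 : F) + u / w = (w + u) / w := by rw [add_div, div_self hw]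
  rw [h1, div_pow, div_mul_div_comm]
  congr 1
  ring

/-- The main Helleseth–Zinoviev identity: `K(t(1+t)³) = K(t³(1+t))`. -/
theorem hz (m : ℕ) (t : GaloisField 2 m) :
    Kl m (t * (1 + t) ^ 3) = Kl m (t ^ 3 * (1 + t)) := by
  have h2 : (2 : GaloisField 2 m) = 0 := h2F m
  by_cases ht0 : t = 0
  · subst ht0; norm_num
  by_cases ht1 : t = 1
  · subst ht1
    have e0 : ((1 : GaloisField 2 m) + 1) = 0 := by linear_combination h2
    rw [show (1 : GaloisField 2 m) * (1 + 1) ^ 3 = 0 by rw [e0]; ring,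
        show (1 : GaloisField 2 m) ^ 3 * (1 + 1) = 0 by rw [e0]; ring]
  -- main case
  letI : Fintype (GaloisField 2 m) := Fintype.ofFinite (GaloisField 2 m)
  letI : DecidableEq (GaloisField 2 m) := Classical.decEq (GaloisField 2 m)
  have h1t : (1 + t) ≠ 0 := fun h => ht1 (by linear_combination h - h2)
  have hc : t * t + t ≠ 0 := by
    have hfac : t * t + t = t * (1 + t) := by ring
    rw [hfac]; exact mul_ne_zero ht0 h1t
  obtain ⟨x₀, hx₀⟩ := exists_tr_one m
  have hKl : ∀ a : GaloisField 2 m,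
      Kl m a = ∑ x ∈ Finset.univ.erase (0 : GaloisField 2 m), chi m (a * x + x⁻¹) :=
    fun a => rfl
  set c : GaloisField 2 m := t * t + t with hc_def
  -- rescaling of the Kloosterman sum
  have reidx : ∀ d : GaloisField 2 m, d ≠ 0 →
      (∑ x ∈ Finset.univ.erase (0 : GaloisField 2 m), chi m ((c * d) * x + x⁻¹))
        = ∑ y ∈ Finset.univ.erase (0 : GaloisField 2 m), chi m (c * y + d * y⁻¹) := by
    intro d hd
    refine Finset.sum_nbij' (fun x => d * x) (fun y => d⁻¹ * y) ?_ ?_ ?_ ?_ ?_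
    · intro a ha
      rw [Finset.mem_erase] at ha ⊢
      exact ⟨mul_ne_zero hd ha.1, Finset.mem_univ _⟩
    · intro a ha
      rw [Finset.mem_erase] at ha ⊢
      exact ⟨mul_ne_zero (inv_ne_zero hd) ha.1, Finset.mem_univ _⟩
    · intro a _
      show d⁻¹ * (d * a) = a
      rw [← mul_assoc, inv_mul_cancel₀ hd, one_mul]
    · intro a _
      show d * (d⁻¹ * a) = a
      rw [← mul_assoc, mul_inv_cancel₀ hd, one_mul]
    · intro x hx
      congr 1
      have hdx : d * (d * x)⁻¹ = x⁻¹ := by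
        rw [mul_inv, ← mul_assoc, mul_inv_cancel₀ hd, one_mul]
      rw [← hdx]; ring
  have eA : Kl m (t ^ 3 * (1 + t))
      = ∑ y ∈ Finset.univ.erase (0 : GaloisField 2 m), chi m (c * y + (t * t) * y⁻¹) := by
    have harg : t ^ 3 * (1 + t) = c * (t * t) := by rw [hc_def]; ring
    rw [harg, hKl]
    exact reidx (t * t) (mul_ne_zero ht0 ht0)
  have eB : Kl m (t * (1 + t) ^ 3)
      = ∑ y ∈ Finset.univ.erase (0 : GaloisField 2 m),
          chi m (c * y + ((1 + t) * (1 + t)) * y⁻¹) := by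
    have harg : t * (1 + t) ^ 3 = c * ((1 + t) * (1 + t)) := by rw [hc_def]; ring
    rw [harg, hKl]
    exact reidx ((1 + t) * (1 + t)) (mul_ne_zero h1t h1t)
  have hsplit : ∀ y : GaloisField 2 m,
      chi m (c * y + ((1 + t) * (1 + t)) * y⁻¹)
        = chi m (c * y + (t * t) * y⁻¹) * chi m (y⁻¹) := by
    intro y
    have harg : c * y + ((1 + t) * (1 + t)) * y⁻¹ = (c * y + (t * t) * y⁻¹) + y⁻¹ := by
      linear_combination (t * y⁻¹) * h2
    rw [harg, chi_add]
  have hdiff : Kl m (t * (1 + t) ^ 3) - Kl m (t ^ 3 * (1 + t))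
      = ∑ y ∈ Finset.univ.erase (0 : GaloisField 2 m),
          chi m (c * y + (t * t) * y⁻¹) * (chi m (y⁻¹) - 1) := by
    rw [eA, eB, ← Finset.sum_sub_distrib]
    refine Finset.sum_congr rfl fun y _ => ?_
    rw [hsplit]; ring
  -- restrict to the trace-one part
  have hfilter : (∑ y ∈ Finset.univ.erase (0 : GaloisField 2 m),
        chi m (c * y + (t * t) * y⁻¹) * (chi m (y⁻¹) - 1))
      = ∑ y ∈ (Finset.univ.erase (0 : GaloisField 2 m)).filter (fun y => tr m y⁻¹ = 1),
          chi m (c * y + (t * t) * y⁻¹) * (chi m (y⁻¹) - 1) := by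
    symm
    refine Finset.sum_filter_of_ne ?_
    intro y _ hne
    by_contra hnot
    have h0 : tr m y⁻¹ = 0 := zmod2_not_one hnot
    rw [chi_tr0 m h0] at hne
    simp at hne
  have hval : (∑ y ∈ (Finset.univ.erase (0 : GaloisField 2 m)).filter (fun y => tr m y⁻¹ = 1),
        chi m (c * y + (t * t) * y⁻¹) * (chi m (y⁻¹) - 1))
      = (-2) * ∑ y ∈ (Finset.univ.erase (0 : GaloisField 2 m)).filter (fun y => tr m y⁻¹ = 1),
          chi m (c * y + (t * t) * y⁻¹) := by
    rw [Finset.mul_sum]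
    refine Finset.sum_congr rfl fun y hy => ?_
    have h1 : tr m y⁻¹ = 1 := (Finset.mem_filter.mp hy).2
    rw [chi_tr1 m h1]; ring
  -- re-index by inversion
  have hinv : (∑ y ∈ (Finset.univ.erase (0 : GaloisField 2 m)).filter (fun y => tr m y⁻¹ = 1),
        chi m (c * y + (t * t) * y⁻¹))
      = ∑ y ∈ Finset.univ.filter (fun y : GaloisField 2 m => tr m y = 1),
          chi m ((t * t) * y + c * y⁻¹) := by
    refine Finset.sum_nbij' (fun y => y⁻¹) (fun y => y⁻¹) ?_ ?_ ?_ ?_ ?_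
    · intro a ha
      rw [Finset.mem_filter] at ha ⊢
      exact ⟨Finset.mem_univ _, ha.2⟩
    · intro a ha
      rw [Finset.mem_filter] at ha
      have ha0 : a ≠ 0 := by
        intro h; rw [h, tr_zero] at ha
        exact zero_ne_one ha.2
      rw [Finset.mem_filter, Finset.mem_erase]
      refine ⟨⟨inv_ne_zero ha0, Finset.mem_univ _⟩, ?_⟩
      rw [inv_inv]; exact ha.2
    · intro a _; show a⁻¹⁻¹ = a; rw [inv_inv]
    · intro a _; show a⁻¹⁻¹ = a; rw [inv_inv]
    · intro y hy
      show chi m (c * y + (t * t) * y⁻¹) = chi m ((t * t) * y⁻¹ + c * y⁻¹⁻¹)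
      rw [inv_inv]
      exact congrArg (chi m) (by ring)
  set M : ℤ := ∑ y ∈ Finset.univ.filter (fun y : GaloisField 2 m => tr m y = 1),
      chi m ((t * t) * y + c * y⁻¹) with hM_def
  have hdiff2 : Kl m (t * (1 + t) ^ 3) - Kl m (t ^ 3 * (1 + t)) = (-2) * M := by
    rw [hdiff, hfilter, hval, hinv]
  -- the Artin-Schreier style parametrization
  have hQtr : ∀ s : GaloisField 2 m, tr m (s * s + s + x₀) = 1 := by
    intro s
    rw [tr_add, tr_add, tr_sq, hx₀, zmod2_add_self, zero_add]
  have hQne : ∀ s : GaloisField 2 m, s * s + s + x₀ ≠ 0 := by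
    intro s h
    have h1 := hQtr s
    rw [h, tr_zero] at h1
    exact zero_ne_one h1
  have hfib : ∀ s₀ : GaloisField 2 m,
      Finset.univ.filter (fun s : GaloisField 2 m => s * s + s + x₀ = s₀ * s₀ + s₀ + x₀)
        = {s₀, s₀ + 1} := by
    intro s₀
    ext s
    simp only [Finset.mem_filter, Finset.mem_univ, true_and, Finset.mem_insert,
      Finset.mem_singleton]
    constructor
    · intro h
      have hz0 : (s + s₀) * (s + s₀ + 1) = 0 := by
        linear_combination h + (s₀ * s₀ + s₀ + s * s₀) * h2
      rcases mul_eq_zero.mp hz0 with h' | h'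
      · left; linear_combination h' - s₀ * h2
      · right; linear_combination h' - (s₀ + 1) * h2
    · rintro (rfl | rfl)
      · rfl
      · linear_combination (s₀ + 1) * h2
  have hcard_fib : ∀ y ∈ Finset.univ.image (fun s : GaloisField 2 m => s * s + s + x₀),
      (Finset.univ.filter (fun s : GaloisField 2 m => s * s + s + x₀ = y)).card = 2 := by
    intro y hy
    obtain ⟨s₀, _, rfl⟩ := Finset.mem_image.mp hy
    rw [hfib s₀]
    rw [Finset.card_insert_of_notMem, Finset.card_singleton]
    simp only [Finset.mem_singleton]
    intro h
    have h1 : (1 : GaloisField 2 m) = 0 := by linear_combination -h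
    exact one_ne_zero h1
  -- the image is exactly the set of trace-one elements
  have himg : Finset.univ.image (fun s : GaloisField 2 m => s * s + s + x₀)
      = Finset.univ.filter (fun y : GaloisField 2 m => tr m y = 1) := by
    apply Finset.eq_of_subset_of_card_le
    · intro y hy
      obtain ⟨s, _, rfl⟩ := Finset.mem_image.mp hy
      rw [Finset.mem_filter]
      exact ⟨Finset.mem_univ _, hQtr s⟩
    · have himgcard : 2 * (Finset.univ.image (fun s : GaloisField 2 m => s * s + s + x₀)).card
          = Fintype.card (GaloisField 2 m) := by
        rw [← Finset.card_univ,
          Finset.card_eq_sum_card_image (fun s : GaloisField 2 m => s * s + s + x₀) Finset.univ,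
          Finset.sum_congr rfl hcard_fib, Finset.sum_const, smul_eq_mul, mul_comm]
      have hT0T1 : (Finset.univ.filter (fun y : GaloisField 2 m => ¬ tr m y = 1)).card
          = (Finset.univ.filter (fun y : GaloisField 2 m => tr m y = 1)).card := by
        refine Finset.card_nbij' (fun y => y + x₀) (fun y => y + x₀) ?_ ?_ ?_ ?_
        · intro a ha
          rw [Finset.mem_coe, Finset.mem_filter] at ha ⊢
          refine ⟨Finset.mem_univ _, ?_⟩
          rw [tr_add, zmod2_not_one ha.2, hx₀, zero_add]
        · intro a ha
          rw [Finset.mem_coe, Finset.mem_filter] at ha ⊢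
          refine ⟨Finset.mem_univ _, ?_⟩
          rw [tr_add, ha.2, hx₀]
          decide
        · intro a _; linear_combination x₀ * h2
        · intro a _; linear_combination x₀ * h2
      have hsplitc := Finset.card_filter_add_card_filter_not
        (s := (Finset.univ : Finset (GaloisField 2 m)))
        (p := fun y : GaloisField 2 m => tr m y = 1)
      rw [Finset.card_univ] at hsplitc
      omega
  -- the fiberwise sum
  have hcomp : (∑ s : GaloisField 2 m, chi m ((t * t) * (s * s + s + x₀) + c * (s * s + s + x₀)⁻¹))
      = 2 * M := by
    have hSC := Finset.sum_comp (s := (Finset.univ : Finset (GaloisField 2 m)))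
        (fun y : GaloisField 2 m => chi m ((t * t) * y + c * y⁻¹))
        (fun s : GaloisField 2 m => s * s + s + x₀)
    rw [hSC, Finset.sum_congr rfl (fun y hy => by rw [hcard_fib y hy]), himg,
      ← Finset.smul_sum, ← hM_def, nsmul_eq_mul]
    norm_num
  -- pointwise reduction to the permutation map g
  have hpoint : ∀ s : GaloisField 2 m,
      chi m ((t * t) * (s * s + s + x₀) + c * (s * s + s + x₀)⁻¹)
        = chi m ((t * t) * x₀) * chi m (c * (s + (s * s + s + x₀)⁻¹)) := by
    intro s
    have e1 : (t * t) * (s * s + s + x₀) + c * (s * s + s + x₀)⁻¹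
        = ((t * s) * (t * s)) + ((t * t) * s + ((t * t) * x₀ + c * (s * s + s + x₀)⁻¹)) := by
      ring
    rw [e1, chi_add, chi_add, chi_add, chi_sq]
    have e2 : chi m (t * s) * chi m ((t * t) * s) = chi m (c * s) := by
      rw [← chi_add]; congr 1; rw [hc_def]; ring
    have e3 : chi m (c * s) * chi m (c * (s * s + s + x₀)⁻¹)
        = chi m (c * (s + (s * s + s + x₀)⁻¹)) := by
      rw [← chi_add]; congr 1; ring
    calc chi m (t * s) * (chi m ((t * t) * s) * (chi m ((t * t) * x₀)
            * chi m (c * (s * s + s + x₀)⁻¹)))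
        = chi m ((t * t) * x₀) * ((chi m (t * s) * chi m ((t * t) * s))
            * chi m (c * (s * s + s + x₀)⁻¹)) := by ring
      _ = chi m ((t * t) * x₀) * (chi m (c * s) * chi m (c * (s * s + s + x₀)⁻¹)) := by rw [e2]
      _ = chi m ((t * t) * x₀) * chi m (c * (s + (s * s + s + x₀)⁻¹)) := by rw [e3]
  -- injectivity of g : s ↦ s + 1/(s² + s + x₀)
  have hginj : Function.Injective (fun s : GaloisField 2 m => s + (s * s + s + x₀)⁻¹) := by
    intro s u hsu
    simp only at hsu
    by_contra hne
    have hAi : (s * s + s + x₀)⁻¹ * (s * s + s + x₀) = 1 := inv_mul_cancel₀ (hQne s)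
    have hBi : (u * u + u + x₀)⁻¹ * (u * u + u + x₀) = 1 := inv_mul_cancel₀ (hQne u)
    have hσ : s + u ≠ 0 := by
      intro h; exact hne (by linear_combination h - u * h2)
    have e2 : s * ((s * s + s + x₀) * (u * u + u + x₀)) + (u * u + u + x₀)
        = u * ((s * s + s + x₀) * (u * u + u + x₀)) + (s * s + s + x₀) := by
      linear_combination ((s * s + s + x₀) * (u * u + u + x₀)) * hsu
        - (u * u + u + x₀) * hAi + (s * s + s + x₀) * hBi
    have hABs : (s + u) * ((s * s + s + x₀) * (u * u + u + x₀)) = (s + u) * ((s + u) + 1) := by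
      linear_combination e2 + (u * ((s * s + s + x₀) * (u * u + u + x₀)) - u * u - u - s * u) * h2
    have hprod : (s * s + s + x₀) * (u * u + u + x₀) = (s + u) + 1 :=
      mul_left_cancel₀ hσ hABs
    have hσ1 : (s + u) + 1 ≠ 0 := by
      intro h
      rw [h] at hprod
      rcases mul_eq_zero.mp hprod with h' | h'
      · exact hQne s h'
      · exact hQne u h'
    have hn : (s + u) * (s + u)⁻¹ = 1 := mul_inv_cancel₀ hσ
    have hV : ((s + u) + 1) * ((s + u) + 1)⁻¹ = 1 := mul_inv_cancel₀ hσ1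
    set n : GaloisField 2 m := (s + u)⁻¹ with hn_def
    set V : GaloisField 2 m := ((s + u) + 1)⁻¹ with hV_def
    -- first trace identity : tr(s·u·n²) = 0
    have i1 : s * u * (n * n) = (s * n) * (s * n) + (s * n) := by
      linear_combination (-(n * s) + 2 * (n * u) - 2) * hn + (-(n * n * u * u) + 2 * (n * u) - 1) * h2
    have td : tr m (s * u * (n * n)) = 0 := by
      rw [i1, tr_add, tr_sq, zmod2_add_self]
    -- main quadratic identity for ρ = s·u·V
    have I2 : (s * u * V) * (s * u * V) + s * u * V = x₀ + x₀ * V + (x₀ * V) * (x₀ * V) + V := by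
      linear_combination (V * x₀ * s - V * x₀ * u + 2 * V * s * u * u + V * s * u
          - 2 * V * u * u * u - 2 * V * u * u - V + x₀ + 2 * u * u + 2 * u) * hV
        + (-(V * V)) * hprod
        + (V * V * x₀ * u * u + V * V * x₀ * u + V * V * u * u * u * u + 2 * V * V * u * u * u
          + V * V * u * u - V * x₀ * u - V * x₀ - 2 * V * u * u * u - 3 * V * u * u - V * u
          - V + u * u + u) * h2
    -- from I2 : tr V = 1
    have tI2 : tr m V = 1 := by
      have h0 : tr m ((s * u * V) * (s * u * V) + s * u * V) = 0 := by
        rw [tr_add, tr_sq, zmod2_add_self]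
      rw [I2, tr_add, tr_add, tr_add, tr_sq, hx₀] at h0
      have key : ∀ a b : ZMod 2, 1 + a + a + b = 0 → b = 1 := by decide
      exact key _ _ h0
    -- second route : tr V = 0
    have i3 : s * u * (n * n) = (s * u * V) * (n * n) + (s * u * V) * n := by
      linear_combination (s * u * n * V) * hn - (s * u * n * n) * hV
    have K1 : x₀ * (n * n) + (x₀ * V) * (n * n) = x₀ * V * n := by
      linear_combination (x₀ * n * V) * hn - (x₀ * n * n) * hV + (x₀ * n * n * V) * h2
    have K2 : V * (n * n) = n + n * n + V := by
      linear_combination (V * n + V) * hn + (n * n + n) * hV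
        + (-(V * n * n * s) - V * n * n * u - V * n * s - V * n * u) * h2
    have e6 : (s * u * V) * (n * n) + ((s * u * V) * n) * ((s * u * V) * n)
        = (x₀ * (n * n) + (x₀ * V) * (n * n)) + ((x₀ * V * n) * (x₀ * V * n)) + V * (n * n) := by
      linear_combination (n * n) * I2
    have tV0 : tr m V = 0 := by
      have s1 : tr m (s * u * (n * n))
          = tr m ((s * u * V) * (n * n)) + tr m ((s * u * V) * n) := by
        rw [i3, tr_add]
      have s2 : tr m ((s * u * V) * n) = tr m (((s * u * V) * n) * ((s * u * V) * n)) :=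
        (tr_sq m _).symm
      have s3 : tr m ((s * u * V) * (n * n)) + tr m (((s * u * V) * n) * ((s * u * V) * n))
          = tr m ((s * u * V) * (n * n) + ((s * u * V) * n) * ((s * u * V) * n)) :=
        (tr_add m _ _).symm
      have s4 : tr m ((s * u * V) * (n * n) + ((s * u * V) * n) * ((s * u * V) * n))
          = tr m (x₀ * (n * n) + (x₀ * V) * (n * n)) + tr m ((x₀ * V * n) * (x₀ * V * n))
            + tr m (V * (n * n)) := by
        rw [e6, tr_add, tr_add]
      have s5 : tr m (x₀ * (n * n) + (x₀ * V) * (n * n)) = tr m (x₀ * V * n) := by rw [K1]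
      have s6 : tr m ((x₀ * V * n) * (x₀ * V * n)) = tr m (x₀ * V * n) := tr_sq m _
      have s7 : tr m (V * (n * n)) = tr m n + tr m n + tr m V := by
        rw [K2, tr_add, tr_add, tr_sq]
      have hchain : (0 : ZMod 2)
          = tr m (x₀ * V * n) + tr m (x₀ * V * n) + (tr m n + tr m n + tr m V) := by
        rw [← td, s1, s2, s3, s4, s5, s6, s7]
      rw [zmod2_add_self (tr m (x₀ * V * n)), zmod2_add_self (tr m n), zero_add, zero_add] at hchain
      exact hchain.symm
    rw [tV0] at tI2
    exact zero_ne_one tI2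
  -- g bijective gives the vanishing of the complete character sum
  have hgsum : (∑ s : GaloisField 2 m, chi m (c * (s + (s * s + s + x₀)⁻¹)))
      = ∑ z : GaloisField 2 m, chi m (c * z) :=
    Function.Bijective.sum_comp (Finite.injective_iff_bijective.mp hginj)
      (fun z => chi m (c * z))
  have hzero : (∑ z : GaloisField 2 m, chi m (c * z)) = 0 := by
    have hshift : (∑ z : GaloisField 2 m, chi m (c * (z + c⁻¹ * x₀)))
        = ∑ z : GaloisField 2 m, chi m (c * z) :=
      Fintype.sum_equiv (Equiv.addRight (c⁻¹ * x₀))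
        (fun z => chi m (c * (z + c⁻¹ * x₀))) (fun z => chi m (c * z)) (fun z => rfl)
    have hterm : ∀ z : GaloisField 2 m, chi m (c * (z + c⁻¹ * x₀)) = - chi m (c * z) := by
      intro z
      have e4 : c * (z + c⁻¹ * x₀) = c * z + x₀ := by
        rw [mul_add, ← mul_assoc, mul_inv_cancel₀ hc, one_mul]
      rw [e4, chi_add, chi_tr1 m hx₀]; ring
    have hneg : (∑ z : GaloisField 2 m, chi m (c * z))
        = - ∑ z : GaloisField 2 m, chi m (c * z) := by
      conv_lhs => rw [← hshift]
      rw [Finset.sum_congr rfl (fun z _ => hterm z), Finset.sum_neg_distrib]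
    linarith
  -- conclude M = 0
  have hM0 : M = 0 := by
    have h2M : 2 * M = chi m ((t * t) * x₀) * ∑ s : GaloisField 2 m,
        chi m (c * (s + (s * s + s + x₀)⁻¹)) := by
      rw [← hcomp, Finset.mul_sum]
      exact Finset.sum_congr rfl fun s _ => hpoint s
    rw [hgsum, hzero, mul_zero] at h2M
    linarith
  have hfin := hdiff2
  rw [hM0] at hfin
  linarith

end Cor4Proof

theorem cor4 (m : ℕ) (hm : 0 < m) (b : GaloisField 2 m)
    (hb0 : b ≠ 0) (hb1 : b ≠ 1) (k : ℤ) :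
    Kl m ((b ^ (k + 1) + b ^ (2 : ℤ) + b) * (b ^ (k + 1) + b ^ (2 : ℤ) + 1) ^ 3 / (1 + b) ^ 4)
      = Kl m ((b ^ (k + 1) + b ^ (2 : ℤ) + b) ^ 3 * (b ^ (k + 1) + b ^ (2 : ℤ) + 1) / (1 + b) ^ 4) := by
  have h2 : (2 : GaloisField 2 m) = 0 := Cor4Proof.h2F m
  have h1b : (1 + b) ≠ 0 := fun h => hb1 (by linear_combination h - h2)
  have hb2 : b ^ (2 : ℤ) = b * b := by
    rw [show (2 : ℤ) = ((2 : ℕ) : ℤ) by norm_num, zpow_natCast, pow_two]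
  have hv : (1 + b) + (b ^ (k + 1) + b * b + b) = b ^ (k + 1) + b * b + 1 := by
    linear_combination b * h2
  have eA : (b ^ (k + 1) + b ^ (2 : ℤ) + b) * (b ^ (k + 1) + b ^ (2 : ℤ) + 1) ^ 3 / (1 + b) ^ 4
      = ((b ^ (k + 1) + b * b + b) / (1 + b))
          * (1 + (b ^ (k + 1) + b * b + b) / (1 + b)) ^ 3 := by
    rw [hb2, ← hv]
    exact Cor4Proof.keyA _ _ h1b
  have eB : (b ^ (k + 1) + b ^ (2 : ℤ) + b) ^ 3 * (b ^ (k + 1) + b ^ (2 : ℤ) + 1) / (1 + b) ^ 4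
      = ((b ^ (k + 1) + b * b + b) / (1 + b)) ^ 3
          * (1 + (b ^ (k + 1) + b * b + b) / (1 + b)) := by
    rw [hb2, ← hv]
    exact Cor4Proof.keyB _ _ h1b
  rw [eA, eB]
  exact Cor4Proof.hz m ((b ^ (k + 1) + b * b + b) / (1 + b))
end
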